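/- Let X(s₀) be an n×p₀ matrix of full column rank, s ⊊ s₀ with complement s⁻ = s₀∖s, H(s) the projection onto span of X(s), μ = X(s₀)β(s₀), and Δ(s) = μᵀ(I − H(s))μ. Then: (a) Δ(s) ≤ ‖β(s⁻)‖₁ · max_{j∈s⁻}|X_jᵀ(I − H(s))μ|; and (b) Δ(s) ≥ λ_min(X(s₀)ᵀX(s₀))·‖β(s⁻)‖₂². -/

import Mathlib

/-!
Write `r = (I - H(s))μ`. Since `H(s)` is the symmetric idempotent fixing the columns of `X(s)`,
`r` is orthogonal to those columns and `Δ = μᵀr = rᵀr`. Expanding `μ = Σ_j β_j X_j` in `μᵀr`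
leaves only the columns of `s⁻`, which gives (a). For (b), `H(s)μ = X d` for some `d`
supported on `s`, so `r = X(s₀) b` with `b = β - d` on `s₀`; then
`Δ = bᵀ X(s₀)ᵀX(s₀) b ≥ λ_min ‖b‖² ≥ λ_min ‖β(s⁻)‖²`, because `b` agrees with `β` on `s⁻`.
-/

open Matrix

/-- The projection matrix `H(t)` onto the column span of the columns of `X` in `t`. -/
noncomputable def proj {n p : ℕ} (X : Matrix (Fin n) (Fin p) ℝ) (t : Finset (Fin p)) :
    Matrix (Fin n) (Fin n) ℝ :=
  let Xt : Matrix (Fin n) {x // x ∈ t} ℝ := Matrix.of fun i k => X i k.1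
  Xt * (Xtᵀ * Xt)⁻¹ * Xtᵀ

theorem Matrix.IsHermitian.iInf_eigenvalues_mul_dotProduct_self_le {m : Type*} [Fintype m]
    [DecidableEq m] {G : Matrix m m ℝ} (hG : G.IsHermitian) (b : m → ℝ) :
    (⨅ i, hG.eigenvalues i) * (b ⬝ᵥ b) ≤ b ⬝ᵥ (G *ᵥ b) := by
  set c := ⨅ i, hG.eigenvalues i
  have hpsd : (G - algebraMap ℝ _ c).PosSemidef := by
    rw [posSemidef_iff_isHermitian_and_spectrum_nonneg]
    refine ⟨hG.sub (isHermitian_diagonal _), ?_⟩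
    rw [← spectrum.sub_singleton_eq, hG.spectrum_real_eq_range_eigenvalues]
    rintro _ ⟨_, ⟨i, rfl⟩, _, rfl, rfl⟩
    exact sub_nonneg.mpr (ciInf_le (Set.finite_range hG.eigenvalues).bddBelow i)
  have := hpsd.dotProduct_mulVec_nonneg b
  simp only [star_trivial, sub_mulVec, dotProduct_sub, Algebra.algebraMap_eq_smul_one,
    smul_mulVec, one_mulVec, dotProduct_smul, smul_eq_mul] at this
  linarith

theorem Finset.sum_mul_le_sum_abs_mul_sup' {α R : Type*} [Ring R] [LinearOrder R]
    [IsStrictOrderedRing R] (u : Finset α) (hu : u.Nonempty) (b a : α → R) :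
    ∑ j ∈ u, b j * a j ≤ (∑ j ∈ u, |b j|) * u.sup' hu fun j => |a j| := by
  rw [Finset.sum_mul]
  refine Finset.sum_le_sum fun j hj => ?_
  calc b j * a j ≤ |b j| * |a j| := (le_abs_self _).trans (abs_mul _ _).le
    _ ≤ |b j| * u.sup' hu fun j => |a j| :=
      mul_le_mul_of_nonneg_left (Finset.le_sup' (fun j => |a j|) hj) (abs_nonneg _)

namespace Matrix

variable {ι κ R : Type*}

abbrev subCols (X : Matrix ι κ R) (t : Finset κ) : Matrix ι t R :=
  of fun i k => X i k.1

theorem subCols_mulVec [Fintype κ] [NonUnitalNonAssocSemiring R] (X : Matrix ι κ R)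
    {t : Finset κ} {g : κ → R} (hg : ∀ j ∉ t, g j = 0) :
    subCols X t *ᵥ (fun k => g k) = X *ᵥ g := by
  ext i
  refine (Finset.sum_coe_sort t fun j => X i j * g j).trans ?_
  exact Finset.sum_subset (Finset.subset_univ t) fun j _ hj => by rw [hg j hj, mul_zero]

theorem mulVec_dotProduct_eq_sum_col [Fintype ι] [Fintype κ] [CommSemiring R]
    (X : Matrix ι κ R) (β : κ → R) (r : ι → R) :
    (X *ᵥ β) ⬝ᵥ r = ∑ j, β j * (X.col j ⬝ᵥ r) := by
  rw [dotProduct_comm, dotProduct_mulVec, dotProduct_comm]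
  exact Finset.sum_congr rfl fun j _ => congrArg (β j * ·) (dotProduct_comm _ _)

theorem mulVec_dotProduct_eq_sum_sdiff [Fintype ι] [Fintype κ] [DecidableEq κ] [CommSemiring R]
    (X : Matrix ι κ R) {s s₀ : Finset κ} {β : κ → R} {r : ι → R}
    (hβ : ∀ j ∉ s₀, β j = 0) (hr : ∀ j ∈ s, X.col j ⬝ᵥ r = 0) :
    (X *ᵥ β) ⬝ᵥ r = ∑ j ∈ s₀ \ s, β j * (X.col j ⬝ᵥ r) := by
  rw [mulVec_dotProduct_eq_sum_col, ← Finset.sum_subset (Finset.subset_univ (s₀ \ s))]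
  intro j _ hj
  by_cases hj₀ : j ∈ s₀
  · rw [hr j (by simpa [hj₀] using hj), mul_zero]
  · rw [hβ j hj₀, zero_mul]

theorem iInf_eigenvalues_gram_mul_sum_sq_le [Fintype ι] [Fintype κ] [DecidableEq κ]
    (X : Matrix ι κ ℝ) {t u : Finset κ} (hut : u ⊆ t) {g : κ → ℝ} (hg : ∀ j ∉ t, g j = 0)
    (hG : ((subCols X t)ᵀ * subCols X t).IsHermitian) :
    (⨅ i, hG.eigenvalues i) * ∑ j ∈ u, g j ^ 2 ≤ (X *ᵥ g) ⬝ᵥ (X *ᵥ g) := by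
  set b : t → ℝ := fun k => g k
  have hpsd : ((subCols X t)ᵀ * subCols X t).PosSemidef := by
    simpa only [conjTranspose_eq_transpose_of_trivial] using
      posSemidef_conjTranspose_mul_self (subCols X t)
  have hmin : 0 ≤ ⨅ i, hG.eigenvalues i := Real.iInf_nonneg hpsd.eigenvalues_nonneg
  have hsum : ∑ j ∈ u, g j ^ 2 ≤ b ⬝ᵥ b := by
    rw [dotProduct, Finset.sum_coe_sort t fun j => g j * g j]
    simp only [sq]
    exact Finset.sum_le_sum_of_subset_of_nonneg hut fun j _ _ => mul_self_nonneg _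
  calc (⨅ i, hG.eigenvalues i) * ∑ j ∈ u, g j ^ 2
      ≤ (⨅ i, hG.eigenvalues i) * (b ⬝ᵥ b) := mul_le_mul_of_nonneg_left hsum hmin
    _ ≤ b ⬝ᵥ (((subCols X t)ᵀ * subCols X t) *ᵥ b) := hG.iInf_eigenvalues_mul_dotProduct_self_le b
    _ = (subCols X t *ᵥ b) ⬝ᵥ (subCols X t *ᵥ b) := by
      rw [← mulVec_mulVec, dotProduct_mulVec, vecMul_transpose]
    _ = (X *ᵥ g) ⬝ᵥ (X *ᵥ g) := by rw [subCols_mulVec X hg]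

end Matrix

section Projection

variable {n p : ℕ} (X : Matrix (Fin n) (Fin p) ℝ) (t : Finset (Fin p))

theorem proj_def :
    proj X t = subCols X t * ((subCols X t)ᵀ * subCols X t)⁻¹ * (subCols X t)ᵀ :=
  rfl

theorem transpose_proj : (proj X t)ᵀ = proj X t := by
  rw [proj_def, transpose_mul, transpose_mul, transpose_transpose, transpose_nonsing_inv,
    transpose_mul, transpose_transpose, Matrix.mul_assoc]

variable {X t}

theorem proj_mul_subCols (ht : LinearIndependent ℝ (subCols X t).col) :
    proj X t * subCols X t = subCols X t := by
  have hgram : ((subCols X t)ᵀ * subCols X t).PosDef := by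
    simpa only [conjTranspose_eq_transpose_of_trivial] using
      PosDef.conjTranspose_mul_self _ (mulVec_injective_iff.mpr ht)
  rw [proj_def, Matrix.mul_assoc, Matrix.mul_assoc,
    nonsing_inv_mul _ ((isUnit_iff_isUnit_det _).mp hgram.isUnit), Matrix.mul_one]

theorem proj_mul_self (ht : LinearIndependent ℝ (subCols X t).col) :
    proj X t * proj X t = proj X t := by
  nth_rewrite 2 [proj_def]
  rw [← Matrix.mul_assoc, ← Matrix.mul_assoc, proj_mul_subCols ht, ← proj_def]

theorem col_dotProduct_one_sub_proj_mulVec (ht : LinearIndependent ℝ (subCols X t).col)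
    {j : Fin p} (hj : j ∈ t) (v : Fin n → ℝ) :
    X.col j ⬝ᵥ ((1 - proj X t) *ᵥ v) = 0 := by
  have hcol : proj X t *ᵥ X.col j = X.col j := by
    have hXj : X.col j = subCols X t *ᵥ Pi.single ⟨j, hj⟩ 1 :=
      (mulVec_single_one (subCols X t) ⟨j, hj⟩).symm
    rw [hXj, mulVec_mulVec, proj_mul_subCols ht]
  rw [dotProduct_mulVec, ← mulVec_transpose, transpose_sub, transpose_one, transpose_proj,
    sub_mulVec, one_mulVec, hcol, sub_self, zero_dotProduct]

theorem dotProduct_one_sub_proj_mulVec (ht : LinearIndependent ℝ (subCols X t).col)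
    (v : Fin n → ℝ) :
    v ⬝ᵥ ((1 - proj X t) *ᵥ v) = ((1 - proj X t) *ᵥ v) ⬝ᵥ ((1 - proj X t) *ᵥ v) := by
  have hidem : (1 - proj X t)ᵀ * (1 - proj X t) = 1 - proj X t := by
    rw [transpose_sub, transpose_one, transpose_proj, Matrix.sub_mul, Matrix.one_mul,
      Matrix.mul_sub, Matrix.mul_one, proj_mul_self ht, sub_self, sub_zero]
  rw [dotProduct_comm, dotProduct_mulVec, ← mulVec_transpose, mulVec_mulVec, hidem,
    dotProduct_comm]

variable (X t)

theorem exists_proj_mulVec_eq (v : Fin n → ℝ) :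
    ∃ d : Fin p → ℝ, (∀ j ∉ t, d j = 0) ∧ proj X t *ᵥ v = X *ᵥ d := by
  classical
  set c := (((subCols X t)ᵀ * subCols X t)⁻¹ * (subCols X t)ᵀ) *ᵥ v
  refine ⟨fun j => if h : j ∈ t then c ⟨j, h⟩ else 0, fun j hj => dif_neg hj, ?_⟩
  rw [← subCols_mulVec X fun j hj => dif_neg hj, proj_def, Matrix.mul_assoc, ← mulVec_mulVec]
  congr 1
  exact funext fun k => by rw [dif_pos k.2]

end Projection

theorem stmt15_general {n p : ℕ} (X : Matrix (Fin n) (Fin p) ℝ) (s s₀ : Finset (Fin p))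
    (hss : s ⊂ s₀)
    (hranks : LinearIndependent ℝ fun k : {x // x ∈ s} => fun i => X i k.1)
    (β : Fin p → ℝ) (hsupp : ∀ j ∉ s₀, β j = 0) :
    let μ : Fin n → ℝ := X *ᵥ β
    let Δ : ℝ := μ ⬝ᵥ ((1 - proj X s) *ᵥ μ)
    let Xs₀ : Matrix (Fin n) {x // x ∈ s₀} ℝ := Matrix.of fun i k => X i k.1
    (Δ ≤ (∑ j ∈ s₀ \ s, |β j|) *
        (s₀ \ s).sup' (Finset.sdiff_nonempty.mpr hss.not_subset)
          fun j => |(fun i => X i j) ⬝ᵥ ((1 - proj X s) *ᵥ μ)|) ∧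
    (∃ hG : (Xs₀ᵀ * Xs₀).IsHermitian,
      (⨅ i, hG.eigenvalues i) * ∑ j ∈ s₀ \ s, (β j) ^ 2 ≤ Δ) := by
  intro μ Δ Xs₀
  have hΔ : Δ = ∑ j ∈ s₀ \ s, β j * (X.col j ⬝ᵥ ((1 - proj X s) *ᵥ μ)) :=
    mulVec_dotProduct_eq_sum_sdiff X hsupp fun j hj =>
      col_dotProduct_one_sub_proj_mulVec hranks hj μ
  refine ⟨hΔ ▸ Finset.sum_mul_le_sum_abs_mul_sup' _ _ _ _,
    (posSemidef_conjTranspose_mul_self Xs₀).isHermitian, ?_⟩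
  obtain ⟨d, hd, hHμ⟩ := exists_proj_mulVec_eq X s μ
  have hr : (1 - proj X s) *ᵥ μ = X *ᵥ (β - d) := by
    rw [sub_mulVec, one_mulVec, hHμ, mulVec_sub]
  have hβd : ∀ j ∈ s₀ \ s, β j = (β - d) j := fun j hj => by
    rw [Pi.sub_apply, hd j (Finset.mem_sdiff.mp hj).2, sub_zero]
  have hsupp' : ∀ j ∉ s₀, (β - d) j = 0 := fun j hj => by
    rw [Pi.sub_apply, hsupp j hj, hd j fun hjs => hj (hss.subset hjs), sub_zero]
  have hΔr : Δ = (X *ᵥ (β - d)) ⬝ᵥ (X *ᵥ (β - d)) := by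
    rw [← hr]
    exact dotProduct_one_sub_proj_mulVec hranks μ
  rw [Finset.sum_congr rfl fun j hj => by rw [hβd j hj], hΔr]
  exact iInf_eigenvalues_gram_mul_sum_sq_le X Finset.sdiff_subset hsupp' _

/-- with `μ = X(s₀)β(s₀)` and `Δ(s) = μᵀ(I − H(s))μ`:
(a) `Δ(s) ≤ ‖β(s⁻)‖₁ · max_{j∈s⁻}|X_jᵀ(I − H(s))μ|`;
(b) `Δ(s) ≥ λ_min(X(s₀)ᵀX(s₀))·‖β(s⁻)‖₂²`. -/
theorem stmt15 {n p : ℕ} (X : Matrix (Fin n) (Fin p) ℝ) (s s₀ : Finset (Fin p))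
    (hss : s ⊂ s₀)
    (hrank : LinearIndependent ℝ fun k : {x // x ∈ s₀} => fun i => X i k.1)
    (hranks : LinearIndependent ℝ fun k : {x // x ∈ s} => fun i => X i k.1)
    (β : Fin p → ℝ) (hsupp : ∀ j ∉ s₀, β j = 0) :
    let μ : Fin n → ℝ := X *ᵥ β
    let Δ : ℝ := μ ⬝ᵥ ((1 - proj X s) *ᵥ μ)
    let Xs₀ : Matrix (Fin n) {x // x ∈ s₀} ℝ := Matrix.of fun i k => X i k.1
    (Δ ≤ (∑ j ∈ s₀ \ s, |β j|) *
        (s₀ \ s).sup' (Finset.sdiff_nonempty.mpr hss.not_subset)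
          fun j => |(fun i => X i j) ⬝ᵥ ((1 - proj X s) *ᵥ μ)|) ∧
    (∃ hG : (Xs₀ᵀ * Xs₀).IsHermitian,
      (⨅ i, hG.eigenvalues i) * ∑ j ∈ s₀ \ s, (β j) ^ 2 ≤ Δ) :=
  stmt15_general X s s₀ hss hranks β hsupp
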